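/- Suppose (𝒳, S, γ, (Λ_a)_{a∈A}) is a spectral decomposition system for a Euclidean space 𝔥 with {Λ_a : a ∈ A} closed in L(𝒳,𝔥), and suppose in addition that the group S is finite. Then for all X, Y ∈ 𝔥, the vector γ(X+Y) − γ(X) belongs to the convex hull of the orbit S·γ(Y) = {s·γ(Y) : s ∈ S}. -/

import Mathlib

open Filter Topology Set Metric
open scoped RealInnerProductSpace

noncomputable section

/-- A spectral decomposition system `(𝒳, S, γ, (Λ_a)_{a ∈ A})` for the space `H`:
`S` acts on `𝒳` by linear isometries (via `act`), `γ : H → 𝒳` is the spectral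
mapping, each `Λ a : 𝒳 → H` is a linear isometry, and the axioms [A], [B], [C] hold,
with `τ` the `S`-invariant ordering mapping of axiom [A]. -/
structure SDS (𝒳 H : Type*) [NormedAddCommGroup 𝒳] [InnerProductSpace ℝ 𝒳]
    [NormedAddCommGroup H] [InnerProductSpace ℝ H]
    (S : Type*) [Group S] (A : Type*) where
  act : S →* (𝒳 ≃ₗᵢ[ℝ] 𝒳)
  γ : H → 𝒳
  Λ : A → 𝒳 →ₗᵢ[ℝ] H
  τ : 𝒳 → 𝒳
  τ_inv : ∀ (s : S) (x : 𝒳), τ (act s x) = τ x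
  τ_orbit : ∀ x : 𝒳, ∃ s : S, τ x = act s x
  γΛ : ∀ (a : A) (x : 𝒳), γ (Λ a x) = τ x
  decomp : ∀ X : H, ∃ a : A, X = Λ a (γ X)
  inner_le : ∀ X Y : H, ⟪X, Y⟫ ≤ ⟪γ X, γ Y⟫

variable {𝒳 H S A : Type*} [NormedAddCommGroup 𝒳] [InnerProductSpace ℝ 𝒳]
    [NormedAddCommGroup H] [InnerProductSpace ℝ H] [Group S]

/-- The set `{Λ_a : a ∈ A}`, regarded as a subset of the space `L(𝒳, H)` of
continuous linear maps with the operator norm. -/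
def SDS.LambdaSet (𝔖 : SDS 𝒳 H S A) : Set (𝒳 →L[ℝ] H) :=
  {L | ∃ a : A, L = (𝔖.Λ a).toContinuousLinearMap}

/-- `A_X = {a ∈ A : X = Λ_a (γ X)}`. -/
def SDS.AX (𝔖 : SDS 𝒳 H S A) (X : H) : Set A := {a | X = 𝔖.Λ a (𝔖.γ X)}

/-!
Everything rests on the estimate `⟪γ(X + Y) - γ X, w⟫ ≤ ⟪γ Y, τ w⟫` for all `w`. Writing
`τ w = s • w`, its right side is `⟪s⁻¹ • γ Y, w⟫`, so for a finite orbit Hahn–Banach turns these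
estimates into membership in the convex hull.

The estimate follows by integrating a bound on the right Dini derivative of
`t ↦ ⟪γ(X + t • Y), w⟫`. If `X + t • Y = Λ_{a_t} γ(X + t • Y)` and `Λ_b` is a limit point of the
`Λ_{a_t}` as `t ↓ x` (it exists because `{Λ_a}` is closed and bounded), then [C] traps the
difference quotients tested against a `τ`-fixed `v` between `⟪Y, Λ_b v⟫` and `⟪Y, Λ_{a_t} v⟫`.
The finitely many translates `s • range τ` cover `𝒳`, so `range τ` spans `𝒳`; hence the
difference quotients tested against any `w` tend to `⟪Y, Λ_b w⟫ ≤ ⟪γ Y, τ w⟫`.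
-/

theorem Submodule.span_eq_top_of_iUnion_image_eq_univ {ι K M : Type*} [Finite ι] [Field K]
    [Infinite K] [AddCommGroup M] [Module K M] (e : ι → M ≃ₗ[K] M) {s : Set M}
    (hs : ⋃ i, e i '' s = univ) : span K s = ⊤ := by
  have := Fintype.ofFinite ι
  by_contra hne
  have hcover : ⋃ i ∈ (Finset.univ : Finset ι), ((span K s).map (e i : M →ₗ[K] M) : Set M) =
      univ := by
    simp only [Finset.mem_univ, iUnion_true]
    refine eq_univ_of_univ_subset (hs ▸ iUnion_mono fun i => ?_)
    rintro _ ⟨y, hy, rfl⟩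
    exact Submodule.mem_map_of_mem (Submodule.subset_span hy)
  refine (Submodule.iUnion_ssubset_of_forall_ne_top_of_card_lt Finset.univ _ (fun i h => hne ?_)
    (by simp [ENat.card_eq_top_of_infinite])).ne hcover
  exact Submodule.map_eq_top_iff.mp h

theorem tendsto_apply_of_span_eq_top {ι R M N : Type*} [Semiring R] [AddCommMonoid M]
    [Module R M] [AddCommMonoid N] [Module R N] [TopologicalSpace N] [ContinuousAdd N]
    [ContinuousConstSMul R N] {s : Set M} (hs : Submodule.span R s = ⊤) {l : Filter ι}
    {f : ι → M →ₗ[R] N} {g : M →ₗ[R] N} (h : ∀ v ∈ s, Tendsto (fun i => f i v) l (𝓝 (g v)))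
    (w : M) : Tendsto (fun i => f i w) l (𝓝 (g w)) := by
  have hw : w ∈ Submodule.span R s := hs ▸ Submodule.mem_top
  induction hw using Submodule.span_induction with
  | mem v hv => exact h v hv
  | zero => simpa using tendsto_const_nhds
  | add v v' _ _ hv hv' => simpa using hv.add hv'
  | smul c v _ hv => simpa using hv.const_smul c

theorem mem_convexHull_of_forall_exists_inner_le {E : Type*} [NormedAddCommGroup E]
    [InnerProductSpace ℝ E] [CompleteSpace E] {s : Set E} (hs : s.Finite) {p : E}
    (h : ∀ w, ∃ k ∈ s, ⟪p, w⟫ ≤ ⟪k, w⟫) : p ∈ convexHull ℝ s := by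
  by_contra hp
  obtain ⟨f, u, hfu, hup⟩ := geometric_hahn_banach_closed_point (convex_convexHull ℝ s)
    (hs.isCompact_convexHull (𝕜 := ℝ)).isClosed hp
  set w := (InnerProductSpace.toDual ℝ E).symm f
  have hf : ∀ z, f z = ⟪z, w⟫ := fun z => by
    rw [real_inner_comm, InnerProductSpace.toDual_symm_apply]
  obtain ⟨k, hk, hpk⟩ := h w
  have hku := hfu k (subset_convexHull ℝ s hk)
  rw [hf] at hku hup
  linarith

theorem real_inner_slope_left {E : Type*} [NormedAddCommGroup E] [InnerProductSpace ℝ E]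
    (c : ℝ → E) (a b : ℝ) (w : E) :
    ⟪slope c a b, w⟫ = slope (fun t => ⟪c t, w⟫) a b := by
  rw [slope_def_module, slope_def_field, real_inner_smul_left, inner_sub_left, div_eq_inv_mul]

namespace SDS

variable (𝔖 : SDS 𝒳 H S A)

theorem act_inv_apply_act (s : S) (x : 𝒳) : 𝔖.act s⁻¹ (𝔖.act s x) = x := by
  rw [map_inv, LinearIsometryEquiv.coe_inv, LinearIsometryEquiv.symm_apply_apply]

theorem inner_act_right (s : S) (x y : 𝒳) : ⟪x, 𝔖.act s y⟫ = ⟪𝔖.act s⁻¹ x, y⟫ := by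
  rw [← (𝔖.act s⁻¹).inner_map_map, act_inv_apply_act]

theorem τ_τ (x : 𝒳) : 𝔖.τ (𝔖.τ x) = 𝔖.τ x := by
  obtain ⟨s, hs⟩ := 𝔖.τ_orbit x
  rw [hs, τ_inv, hs]

theorem inner_le_inner_γ_τ (X : H) (a : A) (x : 𝒳) : ⟪X, 𝔖.Λ a x⟫ ≤ ⟪𝔖.γ X, 𝔖.τ x⟫ := by
  simpa only [γΛ] using 𝔖.inner_le X (𝔖.Λ a x)

theorem norm_γ (X : H) : ‖𝔖.γ X‖ = ‖X‖ := by
  obtain ⟨a, ha⟩ := 𝔖.decomp X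
  conv_rhs => rw [ha, (𝔖.Λ a).norm_map]

theorem lipschitzWith_one_γ : LipschitzWith 1 𝔖.γ := by
  refine LipschitzWith.of_dist_le_mul fun X Y => ?_
  rw [NNReal.coe_one, one_mul, dist_eq_norm, dist_eq_norm]
  refine (pow_le_pow_iff_left₀ (norm_nonneg _) (norm_nonneg _) two_ne_zero).1 ?_
  rw [norm_sub_sq_real, norm_sub_sq_real, norm_γ, norm_γ]
  linarith [𝔖.inner_le X Y]

theorem span_range_τ [Finite S] : Submodule.span ℝ (range 𝔖.τ) = ⊤ :=
  Submodule.span_eq_top_of_iUnion_image_eq_univ (fun s => (𝔖.act s).toLinearEquiv) <|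
    eq_univ_of_forall fun x => by
      obtain ⟨s, hs⟩ := 𝔖.τ_orbit x
      exact mem_iUnion.2
        ⟨s⁻¹, 𝔖.τ x, mem_range_self x, (congrArg _ hs).trans (𝔖.act_inv_apply_act s x)⟩

theorem isCompact_LambdaSet [FiniteDimensional ℝ 𝒳] [FiniteDimensional ℝ H]
    (hcl : IsClosed 𝔖.LambdaSet) : IsCompact 𝔖.LambdaSet := by
  refine (isCompact_closedBall (0 : 𝒳 →L[ℝ] H) 1).of_isClosed_subset hcl ?_
  rintro _ ⟨a, rfl⟩
  simpa using (𝔖.Λ a).norm_toContinuousLinearMap_le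

theorem exists_tendsto_Λ [FiniteDimensional ℝ 𝒳] [FiniteDimensional ℝ H]
    (hcl : IsClosed 𝔖.LambdaSet) {ι : Type*} (F : Ultrafilter ι) (a : ι → A) :
    ∃ b, Tendsto (fun i => (𝔖.Λ (a i)).toContinuousLinearMap) F
      (𝓝 (𝔖.Λ b).toContinuousLinearMap) := by
  obtain ⟨_, ⟨b, rfl⟩, hb⟩ := (𝔖.isCompact_LambdaSet hcl).ultrafilter_le_nhds' (F.map _)
    (Ultrafilter.mem_map.2 (univ_mem' fun i => show _ ∈ 𝔖.LambdaSet from ⟨a i, rfl⟩))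
  exact ⟨b, hb⟩

theorem inner_sub_Λ_le_inner_γ_sub {Z : H} {b : A} (hZ : 𝔖.Λ b (𝔖.γ Z) = Z) (W : H) {v : 𝒳}
    (hv : 𝔖.τ v = v) : ⟪W - Z, 𝔖.Λ b v⟫ ≤ ⟪𝔖.γ W - 𝔖.γ Z, v⟫ := by
  have hW := 𝔖.inner_le_inner_γ_τ W b v
  have hZ' : ⟪Z, 𝔖.Λ b v⟫ = ⟪𝔖.γ Z, v⟫ := by
    conv_lhs => rw [← hZ, (𝔖.Λ b).inner_map_map]
  rw [hv] at hW
  rw [inner_sub_left, inner_sub_left, hZ']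
  linarith

theorem inner_Λ_le_inner_slope {X Y : H} {b : A} {s t : ℝ} (hst : s < t)
    (hb : 𝔖.Λ b (𝔖.γ (X + s • Y)) = X + s • Y) {v : 𝒳} (hv : 𝔖.τ v = v) :
    ⟪Y, 𝔖.Λ b v⟫ ≤ ⟪slope (fun t => 𝔖.γ (X + t • Y)) s t, v⟫ := by
  have h := 𝔖.inner_sub_Λ_le_inner_γ_sub hb (X + t • Y) hv
  rw [add_sub_add_left_eq_sub, ← sub_smul, real_inner_smul_left] at h
  rw [slope_def_module, real_inner_smul_left, le_inv_mul_iff₀ (sub_pos.2 hst)]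
  exact h

theorem inner_slope_le_inner_Λ {X Y : H} {b : A} {s t : ℝ} (hst : s < t)
    (hb : 𝔖.Λ b (𝔖.γ (X + t • Y)) = X + t • Y) {v : 𝒳} (hv : 𝔖.τ v = v) :
    ⟪slope (fun t => 𝔖.γ (X + t • Y)) s t, v⟫ ≤ ⟪Y, 𝔖.Λ b v⟫ := by
  have h := 𝔖.inner_sub_Λ_le_inner_γ_sub hb (X + s • Y) hv
  rw [add_sub_add_left_eq_sub, ← sub_smul, real_inner_smul_left, inner_sub_left] at h
  rw [slope_def_module, real_inner_smul_left, inv_mul_le_iff₀ (sub_pos.2 hst), inner_sub_left]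
  linarith

theorem exists_tendsto_inner_slope [Finite S] [FiniteDimensional ℝ 𝒳] [FiniteDimensional ℝ H]
    (hcl : IsClosed 𝔖.LambdaSet) (X Y : H) (x : ℝ) :
    ∃ (F : Ultrafilter ℝ) (b : A), ↑F ≤ 𝓝[>] x ∧ ∀ w,
      Tendsto (fun z => ⟪slope (fun t => 𝔖.γ (X + t • Y)) x z, w⟫) F (𝓝 ⟪Y, 𝔖.Λ b w⟫) := by
  set c : ℝ → 𝒳 := fun t => 𝔖.γ (X + t • Y)
  set F := Ultrafilter.of (𝓝[>] x)
  have hF : ↑F ≤ 𝓝[>] x := Ultrafilter.of_le _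
  choose a ha using fun z : ℝ => 𝔖.decomp (X + z • Y)
  obtain ⟨b, hb⟩ := 𝔖.exists_tendsto_Λ hcl F a
  have hlineF : Tendsto (fun t : ℝ => X + t • Y) F (𝓝 (X + x • Y)) :=
    ((by fun_prop : Continuous fun t : ℝ => X + t • Y).tendsto x).mono_left
      (hF.trans nhdsWithin_le_nhds)
  have hbx : 𝔖.Λ b (c x) = X + x • Y := by
    refine tendsto_nhds_unique ?_ hlineF
    have hc : Tendsto c F (𝓝 (c x)) :=
      (𝔖.lipschitzWith_one_γ.continuous.tendsto _).comp hlineF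
    have := (continuous_fst.clm_apply continuous_snd).tendsto (_, c x) |>.comp (hb.prodMk_nhds hc)
    simpa [Function.comp_def, c, ← ha] using this
  have hpos : ∀ᶠ z in F, x < z := hF self_mem_nhdsWithin
  refine ⟨F, b, hF, tendsto_apply_of_span_eq_top (f := fun z => innerₛₗ ℝ (slope c x z))
    (g := (innerₛₗ ℝ Y).comp (𝔖.Λ b).toLinearMap) 𝔖.span_range_τ ?_⟩
  rintro _ ⟨v, rfl⟩
  have hv := 𝔖.τ_τ v
  have hupper : Tendsto (fun z => ⟪Y, 𝔖.Λ (a z) (𝔖.τ v)⟫) F (𝓝 ⟪Y, 𝔖.Λ b (𝔖.τ v)⟫) :=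
    tendsto_const_nhds.inner (((ContinuousLinearMap.apply ℝ H _).continuous.tendsto _).comp hb)
  refine tendsto_of_tendsto_of_tendsto_of_le_of_le' tendsto_const_nhds hupper ?_ ?_
  · filter_upwards [hpos] with z hz using 𝔖.inner_Λ_le_inner_slope hz hbx hv
  · filter_upwards [hpos] with z hz using 𝔖.inner_slope_le_inner_Λ hz (ha z).symm hv

theorem inner_γ_add_sub_γ_le [Finite S] [FiniteDimensional ℝ 𝒳] [FiniteDimensional ℝ H]
    (hcl : IsClosed 𝔖.LambdaSet) (X Y : H) (w : 𝒳) :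
    ⟪𝔖.γ (X + Y) - 𝔖.γ X, w⟫ ≤ ⟪𝔖.γ Y, 𝔖.τ w⟫ := by
  set f : ℝ → ℝ := fun t => ⟪𝔖.γ (X + t • Y), w⟫
  have hf : Continuous f := by
    have := 𝔖.lipschitzWith_one_γ.continuous
    fun_prop
  have hslope : ∀ x ∈ Ico (0 : ℝ) 1, ∀ r, ⟪𝔖.γ Y, 𝔖.τ w⟫ < r →
      ∃ᶠ z in 𝓝[>] x, slope f x z < r := by
    intro x _ r hr
    obtain ⟨F, b, hF, hlim⟩ := 𝔖.exists_tendsto_inner_slope hcl X Y x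
    have hlt : ⟪Y, 𝔖.Λ b w⟫ < r := (𝔖.inner_le_inner_γ_τ Y b w).trans_lt hr
    have hev : ∀ᶠ z in F, slope f x z < r := by
      filter_upwards [(hlim w).eventually (gt_mem_nhds hlt)] with z hz
      rwa [← real_inner_slope_left]
    exact hev.frequently.filter_mono hF
  have h := image_le_of_liminf_slope_right_le_deriv_boundary hf.continuousOn (by simp)
    (B := fun t => f 0 + t * ⟪𝔖.γ Y, 𝔖.τ w⟫) (by fun_prop)
    (fun x _ => ((hasDerivAt_mul_const _).const_add _).hasDerivWithinAt) hslope
    (right_mem_Icc.2 zero_le_one)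
  simp only [f, one_smul, zero_smul, add_zero, one_mul] at h
  rw [inner_sub_left]
  linarith

end SDS

/-- Generalized Lidskiĭ theorem: if moreover the group `S` is finite, then for all
`X, Y ∈ H`, `γ(X + Y) - γ(X)` lies in the convex hull of the orbit `S · γ(Y)`. -/
theorem generalized_lidskii
    [FiniteDimensional ℝ 𝒳] [FiniteDimensional ℝ H] [Finite S]
    (𝔖 : SDS 𝒳 H S A) (hcl : IsClosed 𝔖.LambdaSet)
    (X Y : H) :
    𝔖.γ (X + Y) - 𝔖.γ X ∈ convexHull ℝ {z : 𝒳 | ∃ s : S, z = 𝔖.act s (𝔖.γ Y)} := by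
  have horbit : {z : 𝒳 | ∃ s : S, z = 𝔖.act s (𝔖.γ Y)}.Finite :=
    (finite_range fun s => 𝔖.act s (𝔖.γ Y)).subset fun _ ⟨s, hs⟩ => ⟨s, hs.symm⟩
  refine mem_convexHull_of_forall_exists_inner_le horbit fun w => ?_
  obtain ⟨σ, hσ⟩ := 𝔖.τ_orbit w
  refine ⟨𝔖.act σ⁻¹ (𝔖.γ Y), ⟨σ⁻¹, rfl⟩, ?_⟩
  rw [← 𝔖.inner_act_right, ← hσ]
  exact 𝔖.inner_γ_add_sub_γ_le hcl X Y w
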